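/- Let a : Fin n → ℕ be thick-level widths and b : Fin (n-1) → ℕ be thin-level widths with b_j ≥ 2 for all j, b_j < min(a_j, a_{j+1}), and all a_i, b_j even. Then the bridge number B = (1/2)(Σ a_i − Σ b_j) satisfies B ≥ (1/2)·max a_i, i.e., 2B ≥ trunk. -/

import Mathlib

/-!
Deleting the thick level `k` leaves `n - 1` thick levels, which `k.succAbove` matches bijectively
with the thin levels so that each thin width is at most its matched thick width. Hence
`a k ≤ Σ a - Σ b`, and `Σ a - Σ b` is even, so halving and doubling it loses nothing.
-/

open Finset

section
variable {ι κ M : Type*} [Fintype ι] [Fintype κ] [AddCommMonoid M] [PartialOrder M]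
  [IsOrderedAddMonoid M] [CanonicallyOrderedAdd M]

theorem add_sum_le_sum_of_injective_of_ne (a : κ → M) (b : ι → M) {f : ι → κ}
    (hf : Function.Injective f) {k : κ} (hk : ∀ j, f j ≠ k) (hb : ∀ j, b j ≤ a (f j)) :
    a k + ∑ j, b j ≤ ∑ i, a i := by
  classical
  calc a k + ∑ j, b j ≤ a k + ∑ i ∈ univ.map ⟨f, hf⟩, a i := by
        rw [sum_map]; gcongr with j; exact hb j
    _ = ∑ i ∈ (univ.map ⟨f, hf⟩).cons k (by simpa using hk), a i := (sum_cons _).symm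
    _ ≤ ∑ i, a i := sum_le_sum_of_subset (subset_univ _)

theorem Fin.add_sum_le_sum_of_le_adjacent {m : ℕ} (a : Fin (m + 1) → M) (b : Fin m → M)
    (hb : ∀ j, b j ≤ a j.castSucc ∧ b j ≤ a j.succ) (k : Fin (m + 1)) :
    a k + ∑ j, b j ≤ ∑ i, a i := by
  refine add_sum_le_sum_of_injective_of_ne a b k.succAbove_right_injective k.succAbove_ne
    fun j => ?_
  unfold Fin.succAbove
  split_ifs
  exacts [(hb j).1, (hb j).2]

end

theorem stmt_8 (n : ℕ) (a : Fin n → ℕ) (b : Fin (n - 1) → ℕ)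
    (hadj : ∀ j : Fin (n - 1), b j < min (a ⟨j.1, by omega⟩) (a ⟨j.1 + 1, by omega⟩))
    (haeven : ∀ i, Even (a i)) (hbeven : ∀ j, Even (b j)) :
    2 * ((∑ i, a i - ∑ j, b j) / 2) ≥ Finset.univ.sup a := by
  have hle : ∀ k, a k ≤ ∑ i, a i - ∑ j, b j := by
    intro k
    obtain ⟨m, rfl⟩ := Nat.exists_eq_add_one_of_ne_zero k.pos.ne'
    have hb j : b j ≤ a j.castSucc ∧ b j ≤ a j.succ := by
      have := lt_min_iff.mp (hadj j)
      exact ⟨this.1.le, this.2.le⟩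
    exact Nat.le_sub_of_add_le (Fin.add_sum_le_sum_of_le_adjacent a b hb k)
  have heven : Even (∑ i, a i - ∑ j, b j) :=
    (even_sum _ fun i _ => haeven i).tsub (even_sum _ fun j _ => hbeven j)
  rw [Nat.mul_div_cancel' heven.two_dvd]
  exact Finset.sup_le fun k _ => hle k
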